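/- For every n ≥ 1, the polynomial q_n defined by q₁ = 1 − 2α² − α³, q₂ = 4 + 2α − 2α² − α³, q_n = q_{n−2} + q_{n−1} for even n ≥ 4, and q_n = q_{n−2} for odd n ≥ 3, has at least one negative coefficient. -/
import Mathlib


open Polynomial

/-- The `z⁰`-coefficients `P_n` of Ito's normalized HOMFLYPT polynomials of the
links `L_n`, defined by the skein recursion. -/
noncomputable def itoQ : ℕ → ℤ[X]
  | 0 => 0
  | 1 => 1 - 2 * X ^ 2 - X ^ 3
  | 2 => 4 + 2 * X - 2 * X ^ 2 - X ^ 3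
  | (n + 3) =>
      if (n + 3) % 2 = 0 then itoQ (n + 1) + itoQ (n + 2) else itoQ (n + 1)

lemma itoQ_coeff3_neg : ∀ n, 1 ≤ n → (itoQ n).coeff 3 < 0 := by
  intro n
  induction n using Nat.strong_induction_on with
  | _ n ih =>
    match n with
    | 0 => intro h; omega
    | 1 =>
      intro _
      simp [itoQ, coeff_one, coeff_X_pow]
    | 2 =>
      intro _
      norm_num [itoQ, coeff_one, coeff_X_pow, coeff_X]
    | (m + 3) =>
      intro _
      have h1 : (itoQ (m + 1)).coeff 3 < 0 := ih (m + 1) (by omega) (by omega)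
      rw [itoQ]
      split
      · have h2 : (itoQ (m + 2)).coeff 3 < 0 := ih (m + 2) (by omega) (by omega)
        rw [coeff_add]; omega
      · exact h1

/-- For every `n ≥ 1` the polynomial `q_n` has at least one negative coefficient. -/
theorem stmt_12 (n : ℕ) (hn : 1 ≤ n) : ∃ i, (itoQ n).coeff i < 0 :=
  ⟨3, itoQ_coeff3_neg n hn⟩
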